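/- arXiv:2302.06640 — 2 statements merged into one kernel-verified Lean document; each statement's English description precedes it below -/
import Mathlib

section
/- Let m ≥ 2 be an even integer and let x be a real number with 0 < x < 1. Then log(((1-x)/x)^m + 1) = Σ_{k=0}^{m/2 - 1} log(1 - 2x(1-x)(φ_k + 1)) - m·log x, where φ_k = cos((2k+1)π/m). -/
/-!
The roots of `z ^ m + 1` are the `m`-th roots of `-1`, namely `exp ((2k+1)πi/m)`. For even `m` the
roots with indices `k` and `m - 1 - k` are complex conjugate, so pairing them gives
`y ^ m + 1 = ∏_{k < m/2} (y² - 2 cos θ_k y + 1)` over the reals. At `y = (1 - x)/x`, each factor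
multiplied by `x²` is `1 - 2x(1 - x)(cos θ_k + 1)`, and taking logarithms gives the identity; the
factors are nonzero because their product `x ^ m (y ^ m + 1)` is positive.
-/

open Finset

namespace Complex

theorem pow_add_one_eq_prod_sub_exp {m : ℕ} (hm : m ≠ 0) (z : ℂ) :
    z ^ m + 1 = ∏ k ∈ range m, (z - exp ((2 * k + 1) * Real.pi / m * I)) := by
  have hmC : (m : ℂ) ≠ 0 := Nat.cast_ne_zero.mpr hm
  have hroot : exp (Real.pi * I / m) ^ m = -1 := by
    rw [← exp_nat_mul, mul_div_cancel₀ _ hmC, exp_pi_mul_I]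
  have h := congrArg (Polynomial.eval z)
    (X_pow_sub_C_eq_prod (isPrimitiveRoot_exp m hm) (Nat.pos_of_ne_zero hm) hroot)
  simp only [Polynomial.eval_sub, Polynomial.eval_pow, Polynomial.eval_X, Polynomial.eval_C,
    Polynomial.eval_prod, sub_neg_eq_add] at h
  rw [h]
  refine prod_congr rfl fun k _ => ?_
  rw [← exp_nat_mul, ← exp_add]
  congr 2
  field_simp

theorem sub_exp_mul_sub_exp_neg (z θ : ℂ) :
    (z - exp (θ * I)) * (z - exp (-θ * I)) = z ^ 2 - 2 * cos θ * z + 1 := by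
  have hprod : exp (θ * I) * exp (-θ * I) = 1 := by rw [← exp_add]; simp
  linear_combination hprod - z * (two_cos θ).symm

theorem exp_odd_mul_pi_div_reflect {m k : ℕ} (hk : k < m) :
    exp ((2 * ((m - 1 - k : ℕ) : ℂ) + 1) * Real.pi / m * I) =
      exp (-((2 * k + 1) * Real.pi / m) * I) := by
  have hmC : (m : ℂ) ≠ 0 := Nat.cast_ne_zero.mpr (by omega)
  refine exp_eq_exp_iff_exists_int.mpr ⟨1, ?_⟩
  rw [Nat.cast_sub (by omega), Nat.cast_sub (by omega)]
  field_simp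
  push_cast
  ring

theorem pow_add_one_eq_prod_quadratic {r : ℕ} (hr : r ≠ 0) (z : ℂ) :
    z ^ (r + r) + 1 =
      ∏ k ∈ range r, (z ^ 2 - 2 * cos ((2 * k + 1) * Real.pi / (r + r : ℕ)) * z + 1) := by
  rw [pow_add_one_eq_prod_sub_exp (by omega), prod_range_add,
    ← prod_range_reflect
      (fun k ↦ z - exp ((2 * ((r + k : ℕ) : ℂ) + 1) * Real.pi / (r + r : ℕ) * I)),
    ← prod_mul_distrib]
  refine prod_congr rfl fun k hk => ?_
  have hk : k < r := mem_range.mp hk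
  rw [← sub_exp_mul_sub_exp_neg, ← exp_odd_mul_pi_div_reflect (m := r + r) (by omega),
    show r + (r - 1 - k) = r + r - 1 - k by omega]

end Complex

theorem Real.pow_add_one_eq_prod_quadratic {r : ℕ} (hr : r ≠ 0) (y : ℝ) :
    y ^ (r + r) + 1 =
      ∏ k ∈ range r, (y ^ 2 - 2 * Real.cos ((2 * k + 1) * Real.pi / (r + r : ℕ)) * y + 1) := by
  exact_mod_cast Complex.pow_add_one_eq_prod_quadratic hr y

theorem log_prod_even_general (m : ℕ) (hm : 2 ≤ m) (hme : Even m) (x : ℝ) (hx0 : 0 < x) :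
    Real.log (((1 - x) / x) ^ m + 1) =
      (∑ k ∈ Finset.range (m / 2),
        Real.log (1 - 2 * x * (1 - x) * (Real.cos ((2 * (k : ℝ) + 1) * Real.pi / m) + 1)))
      - m * Real.log x := by
  obtain ⟨r, rfl⟩ := hme
  rw [show (r + r) / 2 = r by omega]
  set y := (1 - x) / x
  have hfactor (c : ℝ) : 1 - 2 * x * (1 - x) * (c + 1) = x ^ 2 * (y ^ 2 - 2 * c * y + 1) := by
    simp only [y]
    field_simp
    ring
  have hprod : ∏ k ∈ range r,
      (1 - 2 * x * (1 - x) * (Real.cos ((2 * (k : ℝ) + 1) * Real.pi / (r + r : ℕ)) + 1)) =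
        x ^ (r + r) * (y ^ (r + r) + 1) := by
    simp only [hfactor]
    rw [prod_mul_distrib, prod_const, card_range, ← Real.pow_add_one_eq_prod_quadratic (by omega),
      ← pow_mul, two_mul]
  have hy : 0 < y ^ (r + r) + 1 := by
    have := Even.pow_nonneg ⟨r, rfl⟩ y
    positivity
  have hfactor_ne := prod_ne_zero_iff.mp (hprod.trans_ne (by positivity))
  rw [← Real.log_prod hfactor_ne, hprod, Real.log_mul (by positivity) hy.ne', Real.log_pow]
  ring

theorem log_prod_even (m : ℕ) (hm : 2 ≤ m) (hme : Even m) (x : ℝ) (hx0 : 0 < x) (hx1 : x < 1) :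
    Real.log (((1 - x) / x) ^ m + 1) =
      (∑ k ∈ Finset.range (m / 2),
        Real.log (1 - 2 * x * (1 - x) * (Real.cos ((2 * (k : ℝ) + 1) * Real.pi / m) + 1)))
      - m * Real.log x :=
  log_prod_even_general m hm hme x hx0
end

section
/- Let m ≥ 1 be an odd integer and let x be a real number with 0 < x < 1. Then log(((1-x)/x)^m + 1) = Σ_{k=0}^{(m-3)/2} log(1 - 2x(1-x)(φ_k + 1)) - m·log x, where φ_k = cos((2k+1)π/m) and the sum is empty (equal to zero) when m = 1. -/
/-!
Over `ℂ`, `a ^ m + b ^ m = ∏ j < m, (a - ω_j b)` where `ω_j = exp ((2j+1)πi/m)` runs over the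
`m`-th roots of `-1`. For odd `m = 2h + 1` the root `ω_h` is `-1`, contributing the factor `a + b`,
and `ω_k`, `ω_{2h-k}` are complex conjugates, so each such pair contributes the real quadratic
`a² - 2 cos θ_k a b + b²`. Taking `a = 1 - x`, `b = x` makes `a + b = 1` and turns the quadratics
into `1 - 2x(1-x)(cos θ_k + 1)`; dividing by `x ^ m` and taking logarithms gives the theorem. The
factors are nonzero because their product `(1 - x) ^ m + x ^ m` is positive.
-/

open Complex Polynomial Finset
open scoped Real

theorem Complex.pow_add_one_eq_prod_sub_exp_s1 {m : ℕ} (hm : 0 < m) (z : ℂ) :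
    z ^ m + 1 = ∏ j ∈ range m, (z - exp ((2 * j + 1) * π / m * I)) := by
  have hm' : (m : ℂ) ≠ 0 := Nat.cast_ne_zero.mpr hm.ne'
  have hα : exp (π * I / m) ^ m = -1 := by
    rw [← exp_nat_mul, mul_div_cancel₀ _ hm', exp_pi_mul_I]
  have h := congrArg (eval z) (X_pow_sub_C_eq_prod (isPrimitiveRoot_exp m hm.ne') hm hα)
  simp only [eval_sub, eval_pow, eval_X, eval_C, eval_prod, sub_neg_eq_add] at h
  rw [h]
  refine prod_congr rfl fun j _ => ?_
  rw [← exp_nat_mul, ← exp_add]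
  congr 2
  field_simp

theorem Complex.pow_add_pow_eq_prod_sub_exp_mul {m : ℕ} (hm : 0 < m) (a b : ℂ) :
    a ^ m + b ^ m = ∏ j ∈ range m, (a - exp ((2 * j + 1) * π / m * I) * b) := by
  rcases eq_or_ne b 0 with rfl | hb
  · simp [zero_pow hm.ne']
  calc a ^ m + b ^ m = ((a / b) ^ m + 1) * b ^ m := by
        rw [add_mul, div_pow, div_mul_cancel₀ _ (pow_ne_zero m hb), one_mul]
    _ = (∏ j ∈ range m, (a / b - exp ((2 * j + 1) * π / m * I))) * b ^ (range m).card := by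
      rw [pow_add_one_eq_prod_sub_exp_s1 hm, card_range]
    _ = ∏ j ∈ range m, (a - exp ((2 * j + 1) * π / m * I) * b) := by
      rw [prod_mul_pow_card]
      refine prod_congr rfl fun j _ => ?_
      field_simp

theorem Complex.sub_exp_mul_mul_sub_exp_neg_mul (a b θ : ℂ) :
    (a - exp (θ * I) * b) * (a - exp (-θ * I) * b) = a ^ 2 - 2 * cos θ * a * b + b ^ 2 := by
  rw [cos, neg_mul, exp_neg]
  field_simp
  ring

theorem Complex.exp_two_pi_sub_mul_I (θ : ℂ) : exp ((2 * π - θ) * I) = exp (-θ * I) := by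
  rw [sub_mul, sub_eq_neg_add, exp_add, exp_two_pi_mul_I, mul_one, neg_mul]

theorem Finset.prod_range_two_mul_add_one {M : Type*} [CommMonoid M] (f : ℕ → M) (h : ℕ) :
    ∏ j ∈ range (2 * h + 1), f j = f h * ∏ k ∈ range h, (f k * f (2 * h - k)) := by
  have hreflect : ∏ k ∈ range h, f (2 * h - k) = ∏ k ∈ range h, f (h + 1 + k) := by
    rw [← prod_range_reflect (fun k => f (h + 1 + k))]
    refine prod_congr rfl fun k hk => ?_
    rw [mem_range] at hk
    congr 1
    omega
  rw [prod_mul_distrib, hreflect, show 2 * h + 1 = h + 1 + h by omega, prod_range_add,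
    prod_range_succ]
  ac_rfl

theorem Odd.pow_add_pow_eq_mul_prod_cos {m : ℕ} (hm : Odd m) (a b : ℝ) :
    a ^ m + b ^ m = (a + b) * ∏ k ∈ range ((m - 1) / 2),
      (a ^ 2 - 2 * Real.cos ((2 * k + 1) * π / m) * a * b + b ^ 2) := by
  obtain ⟨h, rfl⟩ := hm
  have hh : (2 * h + 1 - 1) / 2 = h := by omega
  have hm₀ : (2 * h + 1 : ℂ) ≠ 0 := by exact_mod_cast (2 * h).succ_ne_zero
  have hmiddle : exp ((2 * h + 1) * π / (2 * h + 1) * I) = -1 := by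
    rw [mul_div_cancel_left₀ _ hm₀, exp_pi_mul_I]
  have hpair : ∀ k ∈ range h, exp ((2 * ((2 * h - k : ℕ) : ℂ) + 1) * π / (2 * h + 1) * I)
      = exp (-((2 * k + 1) * π / (2 * h + 1)) * I) := fun k hk => by
    rw [← exp_two_pi_sub_mul_I, Nat.cast_sub (by rw [mem_range] at hk; omega)]
    congr 1
    field_simp
    push_cast
    ring
  rw [hh]
  apply ofReal_injective
  push_cast
  rw [pow_add_pow_eq_prod_sub_exp_mul (by omega), prod_range_two_mul_add_one]
  push_cast
  rw [hmiddle, prod_congr rfl fun k hk => by rw [hpair k hk, sub_exp_mul_mul_sub_exp_neg_mul]]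
  ring

theorem Odd.one_sub_pow_add_pow_eq_prod_cos {m : ℕ} (hm : Odd m) (x : ℝ) :
    (1 - x) ^ m + x ^ m = ∏ k ∈ range ((m - 1) / 2),
      (1 - 2 * x * (1 - x) * (Real.cos ((2 * k + 1) * π / m) + 1)) := by
  rw [hm.pow_add_pow_eq_mul_prod_cos, sub_add_cancel, one_mul]
  refine prod_congr rfl fun k _ => ?_
  ring

theorem log_prod_odd_general (m : ℕ) (hmo : Odd m) (x : ℝ) (hx0 : 0 < x) (hx1 : x < 1) :
    Real.log (((1 - x) / x) ^ m + 1) =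
      (∑ k ∈ Finset.range ((m - 1) / 2),
        Real.log (1 - 2 * x * (1 - x) * (Real.cos ((2 * (k : ℝ) + 1) * Real.pi / m) + 1)))
      - m * Real.log x := by
  have hprod := hmo.one_sub_pow_add_pow_eq_prod_cos x
  have hpos : 0 < (1 - x) ^ m + x ^ m := by
    have hx1' := sub_pos.mpr hx1
    positivity
  have hfactors := prod_ne_zero_iff.mp (hprod ▸ hpos.ne')
  calc Real.log (((1 - x) / x) ^ m + 1) = Real.log (((1 - x) ^ m + x ^ m) / x ^ m) := by
        rw [div_pow, div_add_one (pow_ne_zero m hx0.ne')]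
    _ = _ := by
        rw [Real.log_div hpos.ne' (pow_ne_zero m hx0.ne'), Real.log_pow, hprod,
          Real.log_prod hfactors]

theorem log_prod_odd (m : ℕ) (hm : 1 ≤ m) (hmo : Odd m) (x : ℝ) (hx0 : 0 < x) (hx1 : x < 1) :
    Real.log (((1 - x) / x) ^ m + 1) =
      (∑ k ∈ Finset.range ((m - 1) / 2),
        Real.log (1 - 2 * x * (1 - x) * (Real.cos ((2 * (k : ℝ) + 1) * Real.pi / m) + 1)))
      - m * Real.log x :=
  log_prod_odd_general m hmo x hx0 hx1
end
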